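/- (Theorem: determinate BATs determine program traces and formula truth.) Let Σ be a determinate finite-domain BAT, δ a program over Σ, w, w' two worlds, z ∈ ‖δ‖_{w_Σ}, α a situation formula and φ a trace formula restricted to Σ. Then: (1) z ∈ ‖δ‖_{w'_Σ}; (2) w_Σ ⊨ [δ]α iff w'_Σ ⊨ [δ]α; (3) w_Σ ⊨ ⟦δ⟧φ iff w'_Σ ⊨ ⟦δ⟧φ. -/
import Mathlib


/-- A timed trace: a finite sequence of (action standard name, time) pairs. -/
abbrev TimedTrace (Act : Type) := List (Act × ℚ)

/-- A timed trace is valid if its time stamps are monotonically non-decreasing. -/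
def ValidT {Act : Type} (z : TimedTrace Act) : Prop :=
  List.Chain' (· ≤ ·) (z.map Prod.snd)

/-- `time z`: the time value of the last action of `z` (0 for the empty trace). -/
def ttime {Act : Type} (z : TimedTrace Act) : ℚ := (z.getLast?).elim 0 Prod.snd

/-- Fluent (static, Poss-free) formulas over primitive formulas `Prim`; quantifiers
of a finite-domain BAT are abbreviations for finite conjunctions/disjunctions. -/
inductive Form (Prim : Type) : Type where
  | tt : Form Prim
  | atom (f : Prim) : Form Prim
  | neg (φ : Form Prim) : Form Prim
  | and (φ ψ : Form Prim) : Form Prim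

/-- Evaluation of a fluent formula in a state assigning truth to primitives. -/
def evalB {Prim : Type} (s : Prim → Bool) : Form Prim → Bool
  | .tt => true
  | .atom f => s f
  | .neg φ => !(evalB s φ)
  | .and φ ψ => evalB s φ && evalB s ψ

/-- A world: assigns truth to every primitive formula after every timed trace,
and says which actions are possible after every timed trace. -/
structure World (Act Prim : Type) where
  val : Prim → TimedTrace Act → Bool
  poss : Act → TimedTrace Act → Prop

/-- Golog programs: actions, tests, sequence, nondeterministic branching,
pick (nondeterministic choice of argument, over countably many standard names),
iteration and interleaved concurrency. -/
inductive Prog (Act Prim : Type) : Type where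
  | act (a : Act) : Prog Act Prim
  | test (φ : Form Prim) : Prog Act Prim
  | seq (δ1 δ2 : Prog Act Prim) : Prog Act Prim
  | choice (δ1 δ2 : Prog Act Prim) : Prog Act Prim
  | pick (f : ℕ → Prog Act Prim) : Prog Act Prim
  | star (δ : Prog Act Prim) : Prog Act Prim
  | par (δ1 δ2 : Prog Act Prim) : Prog Act Prim

/-- A configuration: a timed trace together with the remaining program. -/
abbrev Config (Act Prim : Type) := TimedTrace Act × Prog Act Prim

/-- `w, z ⊨ φ` for fluent formulas. -/
def holds {Act Prim : Type} (w : World Act Prim) (z : TimedTrace Act) (φ : Form Prim) : Prop :=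
  evalB (fun f => w.val f z) φ = true

/-- Final configurations `F^w`. -/
inductive Final {Act Prim : Type} (w : World Act Prim) : Config Act Prim → Prop where
  | test {z φ} : holds w z φ → Final w (z, .test φ)
  | seq {z δ1 δ2} : Final w (z, δ1) → Final w (z, δ2) → Final w (z, .seq δ1 δ2)
  | choiceL {z δ1 δ2} : Final w (z, δ1) → Final w (z, .choice δ1 δ2)
  | choiceR {z δ1 δ2} : Final w (z, δ2) → Final w (z, .choice δ1 δ2)
  | pick {z f} (n : ℕ) : Final w (z, f n) → Final w (z, .pick f)
  | star {z δ} : Final w (z, .star δ)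
  | par {z δ1 δ2} : Final w (z, δ1) → Final w (z, δ2) → Final w (z, .par δ1 δ2)

/-- The one-step program transition relation `⟨z, δ⟩ →_w ⟨z·(a,t), δ'⟩`. -/
inductive Step {Act Prim : Type} (w : World Act Prim) : Config Act Prim → Config Act Prim → Prop where
  | act {z a t} : ttime z ≤ t → w.poss a z →
      Step w (z, .act a) (z ++ [(a, t)], .test .tt)
  | seq1 {z δ1 δ2 z' γ} : Step w (z, δ1) (z', γ) →
      Step w (z, .seq δ1 δ2) (z', .seq γ δ2)
  | seq2 {z δ1 δ2 c} : Final w (z, δ1) → Step w (z, δ2) c →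
      Step w (z, .seq δ1 δ2) c
  | choiceL {z δ1 δ2 c} : Step w (z, δ1) c → Step w (z, .choice δ1 δ2) c
  | choiceR {z δ1 δ2 c} : Step w (z, δ2) c → Step w (z, .choice δ1 δ2) c
  | pick {z f c} (n : ℕ) : Step w (z, f n) c → Step w (z, .pick f) c
  | star {z δ z' γ} : Step w (z, δ) (z', γ) →
      Step w (z, .star δ) (z', .seq γ (.star δ))
  | parL {z δ1 δ2 z' δ1'} : Step w (z, δ1) (z', δ1') →
      Step w (z, .par δ1 δ2) (z', .par δ1' δ2)
  | parR {z δ1 δ2 z' δ2'} : Step w (z, δ2) (z', δ2') →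
      Step w (z, .par δ1 δ2) (z', .par δ1 δ2')

/-- Reflexive-transitive closure `→*_w` of the transition relation. -/
def TransStar {Act Prim : Type} (w : World Act Prim) :
    Config Act Prim → Config Act Prim → Prop :=
  Relation.ReflTransGen (Step w)

/-- `‖δ‖^z_w`: the finite timed traces of program `δ` starting from trace `z`. -/
def Traces {Act Prim : Type} (w : World Act Prim) (δ : Prog Act Prim)
    (z : TimedTrace Act) : Set (TimedTrace Act) :=
  { z' | ∃ δ', TransStar w (z, δ) (z ++ z', δ') ∧ Final w (z ++ z', δ') }

/-- A determinate finite-domain basic action theory: a determinate initial state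
(a truth value for each primitive formula), a (time-independent) precondition
fluent formula for each action, and a successor state axiom for each fluent. -/
structure BAT (Act Prim : Type) : Type where
  init : Prim → Bool
  pre : Act → Form Prim
  ssa : Prim → Act → Form Prim

/-- `SatBAT Σ w`: the world `w` satisfies `Σ₀ ∪ Σ_pre ∪ Σ_post`; this
characterizes `w_Σ` for determinate `Σ` (it is unique up to the values fixed here). -/
def SatBAT {Act Prim : Type} (Sg : BAT Act Prim) (w : World Act Prim) : Prop :=
  (∀ f, w.val f [] = Sg.init f) ∧
  (∀ a z, w.poss a z ↔ evalB (fun f => w.val f z) (Sg.pre a) = true) ∧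
  (∀ f a t z, w.val f (z ++ [(a, t)]) = evalB (fun g => w.val g z) (Sg.ssa f a))

mutual
/-- Situation formulas: fluent formulas, ¬, ∧, □, `[δ]α` and `⟦δ⟧φ`. -/
inductive SForm (Act Prim : Type) : Type where
  | base (φ : Form Prim) : SForm Act Prim
  | neg (α : SForm Act Prim) : SForm Act Prim
  | and (α β : SForm Act Prim) : SForm Act Prim
  | box (α : SForm Act Prim) : SForm Act Prim
  | after (δ : Prog Act Prim) (α : SForm Act Prim) : SForm Act Prim
  | during (δ : Prog Act Prim) (φ : TForm Act Prim) : SForm Act Prim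
/-- Trace formulas: situation formulas, ¬, ∧ and metric until `U_I`. -/
inductive TForm (Act Prim : Type) : Type where
  | lift (α : SForm Act Prim) : TForm Act Prim
  | neg (φ : TForm Act Prim) : TForm Act Prim
  | and (φ ψ : TForm Act Prim) : TForm Act Prim
  | until (φ ψ : TForm Act Prim) (I : Set ℚ) : TForm Act Prim
end

mutual
/-- `w, z ⊨ α` for situation formulas. -/
def satS {Act Prim : Type} (w : World Act Prim) (z : TimedTrace Act) :
    SForm Act Prim → Prop
  | .base φ => holds w z φ
  | .neg α => ¬ satS w z α
  | .and α β => satS w z α ∧ satS w z β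
  | .box α => ∀ z' : TimedTrace Act, satS w (z ++ z') α
  | .after δ α => ∀ z' ∈ Traces w δ z, satS w (z ++ z') α
  | .during δ φ => ∀ τ ∈ Traces w δ z, satT w z τ φ
/-- `w, z, τ ⊨ φ` for trace formulas. -/
def satT {Act Prim : Type} (w : World Act Prim) (z τ : TimedTrace Act) :
    TForm Act Prim → Prop
  | .lift α => satS w z α
  | .neg φ => ¬ satT w z τ φ
  | .and φ ψ => satT w z τ φ ∧ satT w z τ ψ
  | .until φ ψ I => ∃ z1 τ' : TimedTrace Act, z1 ≠ [] ∧ τ = z1 ++ τ' ∧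
      (ttime z1 - ttime z) ∈ I ∧ satT w (z ++ z1) τ' ψ ∧
      ∀ z2 z3 : TimedTrace Act, z1 = z2 ++ z3 → z2 ≠ z1 → satT w (z ++ z2) (z3 ++ τ') φ
end

/-- determinate BATs determine program traces and formula truth.
For any two worlds satisfying the determinate finite-domain BAT `Σ`, any
`z ∈ ‖δ‖_{w_Σ}`, any situation formula `α` and trace formula `φ` restricted to
`Σ`: (1) `z ∈ ‖δ‖_{w'_Σ}`; (2) `w_Σ ⊨ [δ]α` iff `w'_Σ ⊨ [δ]α`;
(3) `w_Σ ⊨ ⟦δ⟧φ` iff `w'_Σ ⊨ ⟦δ⟧φ`. -/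
theorem det_bat_theorem {Act Prim : Type} (Sg : BAT Act Prim)
    (δ : Prog Act Prim) (wS w'S : World Act Prim)
    (hw : SatBAT Sg wS) (hw' : SatBAT Sg w'S)
    (z : TimedTrace Act) (hz : z ∈ Traces wS δ [])
    (α : SForm Act Prim) (φ : TForm Act Prim) :
    z ∈ Traces w'S δ [] ∧
    (satS wS [] (.after δ α) ↔ satS w'S [] (.after δ α)) ∧
    (satS wS [] (.during δ φ) ↔ satS w'S [] (.during δ φ)) := by
  have hval : ∀ z (f : Prim), wS.val f z = w'S.val f z := by
    intro z
    induction z using List.reverseRecOn with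
    | nil => intro f; rw [hw.1, hw'.1]
    | append_singleton z p ih =>
      obtain ⟨a, t⟩ := p
      intro f
      rw [hw.2.2, hw'.2.2]
      congr 1
      funext g
      exact ih g
  have heq : wS = w'S := by
    obtain ⟨v, p⟩ := wS
    obtain ⟨v', p'⟩ := w'S
    have hv : v = v' := by funext f z; exact hval z f
    subst hv
    have hp : p = p' := by
      funext a z
      exact propext ((hw.2.1 a z).trans (hw'.2.1 a z).symm)
    subst hp
    rfl
  subst heq
  exact ⟨hz, Iff.rfl, Iff.rfl⟩
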